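/- arXiv:2307.03531 — 4 statements merged into one kernel-verified Lean document; each statement's English description precedes it below -/
import Mathlib

section
/- For n = 2d, the maximum of |I(F,G)| over all cross-Sperner pairs (F,G) of families of subsets of [n] equals 2^n - 2^{d+1} + 1, where I(F,G) = {A ∩ B : A ∈ F, B ∈ G}. -/
open Finset

def CrossSperner {α : Type*} [DecidableEq α] (F G : Finset (Finset α)) : Prop :=
  ∀ A ∈ F, ∀ B ∈ G, ¬ A ⊆ B ∧ ¬ B ⊆ A

def interFam {α : Type*} [DecidableEq α] (F G : Finset (Finset α)) : Finset (Finset α) :=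
  (F ×ˢ G).image fun p => p.1 ∩ p.2

noncomputable def mSperner (n : ℕ) : ℕ :=
  sSup {k | ∃ F G : Finset (Finset (Fin n)), CrossSperner F G ∧ k = (interFam F G).card}

/-! Write `e = 2 ^ d`. For a cross-Sperner pair, `I(F, G)`, `F` and `G` are pairwise disjoint,
since each member of `I(F, G)` lies below a member of `F` and below one of `G`; hence
`|I| + |F| + |G| ≤ e²`. Together with `|I| ≤ |F| |G|` this gives `|I| ≤ (e - 1)²`: if
`|F| + |G| ≥ 2e - 1` use the first bound, otherwise AM-GM on the second.

The bound is attained by splitting the ground set into halves `S ⊔ T` and taking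
`F = {X ∪ T : X ⊊ S}`, `G = {Y ∪ S : Y ⊊ T}`: then `(X ∪ T) ∩ (Y ∪ S) = X ∪ Y`, and these
`(e - 1)²` sets are distinct. -/

namespace CrossSperner

variable {α : Type*} [DecidableEq α] {F G : Finset (Finset α)}

theorem disjoint (h : CrossSperner F G) : Disjoint F G :=
  disjoint_left.2 fun A hF hG => (h A hF A hG).1 subset_rfl

theorem disjoint_interFam_left (h : CrossSperner F G) : Disjoint (interFam F G) F := by
  refine disjoint_left.2 fun C hC hCF => ?_
  obtain ⟨⟨A, B⟩, hAB, rfl⟩ := mem_image.1 hC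
  exact (h _ hCF B (mem_product.1 hAB).2).1 inter_subset_right

theorem disjoint_interFam_right (h : CrossSperner F G) : Disjoint (interFam F G) G := by
  refine disjoint_left.2 fun C hC hCG => ?_
  obtain ⟨⟨A, B⟩, hAB, rfl⟩ := mem_image.1 hC
  exact (h A (mem_product.1 hAB).1 _ hCG).2 inter_subset_left

theorem card_interFam_add_card_add_card_le [Fintype α] (h : CrossSperner F G) :
    #(interFam F G) + #F + #G ≤ 2 ^ Fintype.card α := by
  rw [← card_union_of_disjoint h.disjoint_interFam_left, ← card_union_of_disjoint
    (disjoint_union_left.2 ⟨h.disjoint_interFam_right, h.disjoint⟩), ← Fintype.card_finset]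
  exact card_le_univ _

end CrossSperner

theorem card_interFam_le_mul {α : Type*} [DecidableEq α] (F G : Finset (Finset α)) :
    #(interFam F G) ≤ #F * #G :=
  card_product F G ▸ card_image_le

theorem Nat.le_sub_one_sq_of_add_add_le_sq {i a b e : ℕ} (h₁ : i + a + b ≤ e ^ 2)
    (h₂ : i ≤ a * b) : i ≤ (e - 1) ^ 2 := by
  obtain _ | f := e
  · simp_all
  rw [Nat.add_sub_cancel]
  by_cases hab : a + b ≤ 2 * f
  · nlinarith [sq_nonneg ((a : ℤ) - b)]
  · nlinarith

theorem CrossSperner.card_interFam_le {α : Type*} [DecidableEq α] [Fintype α]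
    {F G : Finset (Finset α)} {d : ℕ} (hα : Fintype.card α ≤ 2 * d) (h : CrossSperner F G) :
    #(interFam F G) ≤ (2 ^ d - 1) ^ 2 := by
  refine Nat.le_sub_one_sq_of_add_add_le_sq ?_ (card_interFam_le_mul F G)
  calc #(interFam F G) + #F + #G ≤ 2 ^ Fintype.card α := h.card_interFam_add_card_add_card_le
    _ ≤ (2 ^ d) ^ 2 := by rw [← pow_mul, mul_comm]; exact Nat.pow_le_pow_right two_pos hα

namespace Finset

variable {α : Type*} [DecidableEq α] {S T X Y : Finset α}

theorem card_ssubsets (S : Finset α) : #S.ssubsets = 2 ^ #S - 1 := by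
  rw [ssubsets, card_erase_of_mem (mem_powerset_self S), card_powerset]

theorem union_inter_eq_left (hX : X ⊆ S) (hY : Disjoint Y S) : (X ∪ Y) ∩ S = X := by
  rw [union_inter_distrib_right, inter_eq_left.2 hX, disjoint_iff_inter_eq_empty.1 hY,
    union_empty]

theorem union_inter_union_eq (hX : X ⊆ S) (hY : Y ⊆ T) (hST : Disjoint S T) :
    (X ∪ T) ∩ (Y ∪ S) = X ∪ Y := by
  ext i
  have := @hX i
  have := @hY i
  have := @disjoint_left.1 hST i
  simp only [mem_inter, mem_union]
  tauto

theorem not_union_subset_union_of_ssubset (hY : Y ⊂ T) (hST : Disjoint S T) :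
    ¬ X ∪ T ⊆ Y ∪ S := by
  intro hsub
  obtain ⟨t, htT, htY⟩ := exists_of_ssubset hY
  rcases mem_union.1 (hsub (mem_union_right X htT)) with htY' | htS
  · exact htY htY'
  · exact disjoint_left.1 hST htS htT

end Finset

section Construction

variable {α : Type*} [DecidableEq α] {S T : Finset α}

theorem crossSperner_image_ssubsets_union (hST : Disjoint S T) :
    CrossSperner (S.ssubsets.image (· ∪ T)) (T.ssubsets.image (· ∪ S)) := by
  simp only [CrossSperner, mem_image, mem_ssubsets]
  rintro _ ⟨X, hX, rfl⟩ _ ⟨Y, hY, rfl⟩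
  exact ⟨not_union_subset_union_of_ssubset hY hST,
    not_union_subset_union_of_ssubset hX hST.symm⟩

theorem card_interFam_image_ssubsets_union (hST : Disjoint S T) :
    (2 ^ #S - 1) * (2 ^ #T - 1) ≤
      #(interFam (S.ssubsets.image (· ∪ T)) (T.ssubsets.image (· ∪ S))) := by
  rw [← card_ssubsets, ← card_ssubsets, ← card_product]
  refine card_le_card_of_injOn (fun p => p.1 ∪ p.2) ?_ ?_
  · rintro ⟨X, Y⟩ hXY
    simp only [coe_product, Set.mem_prod, mem_coe, mem_ssubsets] at hXY
    refine mem_image.2 ⟨⟨X ∪ T, Y ∪ S⟩, ?_, union_inter_union_eq hXY.1.le hXY.2.le hST⟩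
    exact mem_product.2 ⟨mem_image_of_mem _ (mem_ssubsets.2 hXY.1),
      mem_image_of_mem _ (mem_ssubsets.2 hXY.2)⟩
  · rintro ⟨X, Y⟩ hXY ⟨X', Y'⟩ hXY' heq
    simp only [coe_product, Set.mem_prod, mem_coe, mem_ssubsets] at hXY hXY' heq
    have hX : X = X' := by
      rw [← union_inter_eq_left hXY.1.le (hST.symm.mono_left hXY.2.le), heq,
        union_inter_eq_left hXY'.1.le (hST.symm.mono_left hXY'.2.le)]
    have hY : Y = Y' := by
      rw [← union_inter_eq_left hXY.2.le (hST.mono_left hXY.1.le), union_comm, heq,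
        union_comm, union_inter_eq_left hXY'.2.le (hST.mono_left hXY'.1.le)]
    rw [hX, hY]

end Construction

theorem mSperner_two_mul (d : ℕ) : mSperner (2 * d) = (2 ^ d - 1) ^ 2 := by
  obtain ⟨S, -, hS⟩ := exists_subset_card_eq (s := (univ : Finset (Fin (2 * d)))) (n := d)
    (by rw [card_univ, Fintype.card_fin]; omega)
  have hSc : #Sᶜ = d := by rw [card_compl, hS, Fintype.card_fin]; omega
  have hα : Fintype.card (Fin (2 * d)) ≤ 2 * d := (Fintype.card_fin _).le
  have hST : Disjoint S Sᶜ := disjoint_compl_right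
  refine IsGreatest.csSup_eq ⟨⟨_, _, crossSperner_image_ssubsets_union hST, ?_⟩, ?_⟩
  · refine le_antisymm ?_ ((crossSperner_image_ssubsets_union hST).card_interFam_le hα)
    simpa only [hS, hSc, sq] using card_interFam_image_ssubsets_union hST
  · rintro k ⟨F, G, h, rfl⟩
    exact h.card_interFam_le hα

theorem stmt0 (d : ℕ) (hd : 1 ≤ d) :
    mSperner (2 * d) = 2 ^ (2 * d) - 2 ^ (d + 1) + 1 := by
  have h2 : 2 ≤ 2 ^ d := Nat.le_self_pow (by omega) 2
  rw [mSperner_two_mul, pow_mul', pow_succ 2 d]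
  obtain ⟨f, hf⟩ : ∃ f, 2 ^ d = f + 1 := ⟨2 ^ d - 1, by omega⟩
  rw [hf, Nat.add_sub_cancel]
  have : 1 ≤ f ^ 2 := Nat.one_le_pow _ _ (by omega)
  have : (f + 1) ^ 2 = f ^ 2 + 2 * f + 1 := by ring
  omega
end

section
/- Let X, Y be disjoint nonempty sets with X ∪ Y = [n]. If F = {A ∪ Y : A ⊊ X} and G = {B ∪ X : B ⊊ Y}, then (F,G) is a cross-Sperner pair and |I(F,G)| = 2^n - 2^{|X|} - 2^{|Y|} + 1. -/
open Finset

lemma card_ssubsets' {α : Type*} [DecidableEq α] (s : Finset α) :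
    s.ssubsets.card = 2 ^ s.card - 1 := by
  rw [ssubsets, card_erase_of_mem (mem_powerset_self s), card_powerset]

theorem stmt2 (n : ℕ) (X Y : Finset (Fin n)) (hXY : Disjoint X Y)
    (hX : X.Nonempty) (hY : Y.Nonempty) (hcover : X ∪ Y = Finset.univ)
    (F G : Finset (Finset (Fin n)))
    (hF : F = X.ssubsets.image (fun A => A ∪ Y))
    (hG : G = Y.ssubsets.image (fun B => B ∪ X)) :
    CrossSperner F G ∧ (interFam F G).card = 2 ^ n - 2 ^ X.card - 2 ^ Y.card + 1 := by
  subst hF hG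
  have hd : ∀ a : Fin n, a ∈ X → a ∈ Y → False := fun a h1 h2 => disjoint_left.1 hXY h1 h2
  constructor
  · intro A hA B hB
    simp only [mem_image, mem_ssubsets] at hA hB
    obtain ⟨A', hA', rfl⟩ := hA
    obtain ⟨B', hB', rfl⟩ := hB
    constructor
    · intro h
      refine hB'.not_subset fun y hy => ?_
      have := h (mem_union_right _ hy)
      rcases mem_union.1 this with h1 | h1
      · exact h1
      · exact absurd hy (fun hy => hd y h1 hy)
    · intro h
      refine hA'.not_subset fun x hx => ?_
      have := h (mem_union_right _ hx)
      rcases mem_union.1 this with h1 | h1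
      · exact h1
      · exact absurd h1 (fun hy => hd x hx hy)
  · have hib : ∀ A ⊆ X, ∀ B ⊆ Y, (A ∪ Y) ∩ (B ∪ X) = A ∪ B := by
      intro A hA B hB
      ext a
      simp only [mem_inter, mem_union]
      have h1 := @hA a
      have h2 := @hB a
      have h3 := hd a
      tauto
    have hkey : interFam (X.ssubsets.image (fun A => A ∪ Y)) (Y.ssubsets.image (fun B => B ∪ X))
        = (X.ssubsets ×ˢ Y.ssubsets).image (fun p => p.1 ∪ p.2) := by
      ext S
      simp only [interFam, mem_image, mem_product, Prod.exists, mem_ssubsets]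
      constructor
      · rintro ⟨A1, B1, ⟨hA1, hB1⟩, rfl⟩
        obtain ⟨A, hA, rfl⟩ := hA1
        obtain ⟨B, hB, rfl⟩ := hB1
        exact ⟨A, B, ⟨hA, hB⟩, (hib A hA.subset B hB.subset).symm ▸ rfl⟩
      · rintro ⟨A, B, ⟨hA, hB⟩, rfl⟩
        exact ⟨A ∪ Y, B ∪ X, ⟨⟨A, hA, rfl⟩, ⟨B, hB, rfl⟩⟩, hib A hA.subset B hB.subset⟩
    have hinj : Set.InjOn (fun p : Finset (Fin n) × Finset (Fin n) => p.1 ∪ p.2)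
        ↑(X.ssubsets ×ˢ Y.ssubsets) := by
      rintro ⟨A, B⟩ hp ⟨A', B'⟩ hq (h : A ∪ B = A' ∪ B')
      simp only [coe_product, Set.mem_prod, mem_coe, mem_ssubsets] at hp hq
      have hAX := hp.1.subset; have hBY := hp.2.subset
      have hAX' := hq.1.subset; have hBY' := hq.2.subset
      have key : ∀ C ⊆ X, ∀ D ⊆ Y, (C ∪ D) ∩ X = C := by
        intro C hC D hD
        ext a
        simp only [mem_inter, mem_union]
        have h1 := @hC a
        have h2 := @hD a
        have h3 := hd a
        tauto
      have key2 : ∀ C ⊆ X, ∀ D ⊆ Y, (C ∪ D) ∩ Y = D := by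
        intro C hC D hD
        ext a
        simp only [mem_inter, mem_union]
        have h1 := @hC a
        have h2 := @hD a
        have h3 := hd a
        tauto
      have e1 : A = A' := by
        rw [← key A hAX B hBY, ← key A' hAX' B' hBY', h]
      have e2 : B = B' := by
        rw [← key2 A hAX B hBY, ← key2 A' hAX' B' hBY', h]
      simp [e1, e2]
    rw [hkey, card_image_of_injOn hinj, card_product, card_ssubsets', card_ssubsets']
    have hn : X.card + Y.card = n := by
      rw [← card_union_of_disjoint hXY, hcover, card_univ, Fintype.card_fin]
    obtain ⟨p, hp⟩ : ∃ p, 2 ^ X.card = p + 1 :=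
      ⟨2 ^ X.card - 1, (Nat.succ_pred_eq_of_pos (Nat.pow_pos (by norm_num))).symm⟩
    obtain ⟨q, hq⟩ : ∃ q, 2 ^ Y.card = q + 1 :=
      ⟨2 ^ Y.card - 1, (Nat.succ_pred_eq_of_pos (Nat.pow_pos (by norm_num))).symm⟩
    have h2n : 2 ^ n = (p + 1) * (q + 1) := by rw [← hn, pow_add, hp, hq]
    rw [hp, hq, h2n]
    have h1 : (p + 1) * (q + 1) = p * q + p + q + 1 := by ring
    have h2 : p * q = (p + 1 - 1) * (q + 1 - 1) := by simp
    have hxp : 2 ^ 1 ≤ 2 ^ X.card := Nat.pow_le_pow_right (by norm_num) hX.card_pos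
    have hyp : 2 ^ 1 ≤ 2 ^ Y.card := Nat.pow_le_pow_right (by norm_num) hY.card_pos
    rw [hp] at hxp
    rw [hq] at hyp
    have hp1 : 1 ≤ p := by omega
    have hq1 : 1 ≤ q := by omega
    rw [← h2, h1]
    have h3 : 1 ≤ p * q := Nat.one_le_iff_ne_zero.2 (by positivity)
    omega
end

section
/- Let (F,G) be a cross-Sperner pair of subsets of [n] with |I(F,G)| = m(n), and let X = ∩_{A∈F} A and Y = ∩_{B∈G} B. Then X ∩ Y = ∅. -/
open Finset

/-!
If some `x` lay in every member of `F` and of `G`, then adding to `G` the sets `B \ {x}` would keep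
the pair cross-Sperner (for `A ∈ F`, `B \ {x} ⊆ A` would force `B ⊆ A`), while every intersection
`A ∩ B` would get the new partner `A ∩ (B \ {x})`. So `|I(F, G)|` would double, contradicting its
maximality, since it is positive.
-/

namespace CrossSperner

variable {α : Type*} [DecidableEq α]

theorem union_image_erase {F G : Finset (Finset α)} {x : α} (hFG : CrossSperner F G)
    (hxF : ∀ A ∈ F, x ∈ A) : CrossSperner F (G ∪ G.image (·.erase x)) := by
  intro A hA B hB
  rcases mem_union.1 hB with hB | hB
  · exact hFG A hA B hB
  obtain ⟨B₀, hB₀, rfl⟩ := mem_image.1 hB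
  refine ⟨fun h ↦ notMem_erase x B₀ (h (hxF A hA)), fun h ↦ (hFG A hA B₀ hB₀).2 ?_⟩
  exact (insert_erase_subset x B₀).trans (insert_subset (hxF A hA) h)

end CrossSperner

section interFam

variable {α : Type*} [DecidableEq α]

theorem interFam_union_right (F G H : Finset (Finset α)) :
    interFam F (G ∪ H) = interFam F G ∪ interFam F H := by
  simp only [interFam, product_union, image_union]

theorem interFam_image_erase_right (F G : Finset (Finset α)) (x : α) :
    interFam F (G.image (·.erase x)) = (interFam F G).image (·.erase x) := by
  ext C
  simp [interFam, inter_erase]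

theorem interFam_nonempty {F G : Finset (Finset α)} (hF : F.Nonempty) (hG : G.Nonempty) :
    (interFam F G).Nonempty :=
  (hF.product hG).image _

theorem mem_of_mem_interFam {F G : Finset (Finset α)} {x : α} (hxF : ∀ A ∈ F, x ∈ A)
    (hxG : ∀ B ∈ G, x ∈ B) {C : Finset α} (hC : C ∈ interFam F G) : x ∈ C := by
  obtain ⟨⟨A, B⟩, hAB, rfl⟩ := mem_image.1 hC
  exact mem_inter.2 ⟨hxF A (mem_product.1 hAB).1, hxG B (mem_product.1 hAB).2⟩

end interFam

theorem card_union_image_erase {α : Type*} [DecidableEq α] {S : Finset (Finset α)} {x : α}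
    (hx : ∀ C ∈ S, x ∈ C) : #(S ∪ S.image (·.erase x)) = 2 * #S := by
  have hdisj : Disjoint S (S.image (·.erase x)) := by
    rw [disjoint_right]
    rintro _ himage hS
    obtain ⟨C, -, rfl⟩ := mem_image.1 himage
    exact notMem_erase x C (hx _ hS)
  rw [card_union_of_disjoint hdisj, card_image_of_injOn ((erase_injOn' x).mono hx), two_mul]

theorem card_interFam_le_mSperner {n : ℕ} {F G : Finset (Finset (Fin n))}
    (hFG : CrossSperner F G) : #(interFam F G) ≤ mSperner n :=
  le_csSup ⟨Fintype.card (Finset (Fin n)), by rintro _ ⟨F, G, -, rfl⟩; exact card_le_univ _⟩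
    ⟨F, G, hFG, rfl⟩

theorem stmt9_general (n : ℕ) (F G : Finset (Finset (Fin n)))
    (hFG : CrossSperner F G) (hFne : F.Nonempty) (hGne : G.Nonempty)
    (hmax : (interFam F G).card = mSperner n) :
    Disjoint (F.inf id) (G.inf id) := by
  rw [disjoint_left]
  intro x hxF hxG
  have hxA : ∀ A ∈ F, x ∈ A := mem_inf.1 hxF
  have hxB : ∀ B ∈ G, x ∈ B := mem_inf.1 hxG
  have hdouble : #(interFam F (G ∪ G.image (·.erase x))) = 2 * #(interFam F G) := by
    rw [interFam_union_right, interFam_image_erase_right,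
      card_union_image_erase fun _ ↦ mem_of_mem_interFam hxA hxB]
  have hle := card_interFam_le_mSperner (hFG.union_image_erase hxA)
  have hpos := (interFam_nonempty hFne hGne).card_pos
  omega

theorem stmt9 (n : ℕ) (hn : 1 < n) (F G : Finset (Finset (Fin n)))
    (hFG : CrossSperner F G) (hFne : F.Nonempty) (hGne : G.Nonempty)
    (hmax : (interFam F G).card = mSperner n) :
    Disjoint (F.inf id) (G.inf id) :=
  stmt9_general n F G hFG hFne hGne hmax
end

section
/- Let 0 < a < m < n and b = m - a. Then (2^{n-m} - 1)(2^m - 2^a - 2^b + 1) < 2^n - 2^{n-a} - 2^{n-b} + 2^{n-m}, and moreover this right-hand side is strictly less than 2^n - 2^{n-a} - 2^a + 1. -/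
/-! With `A = 2^a`, `B = 2^b`, `C = 2^(n-m)`, all at least `2`, the middle quantity factors as
`C (A - 1)(B - 1)`. It exceeds the left side by `(A - 1)(B - 1)` and falls short of the right side
by `(C - 1)(A - 1)`. -/

open Finset

section OrderedRing

variable {R : Type*} [CommRing R] [PartialOrder R] [IsStrictOrderedRing R] {A B C : R}

theorem sub_one_mul_lt_of_one_lt (hA : 1 < A) (hB : 1 < B) (C : R) :
    (C - 1) * (A * B - A - B + 1) < C * A * B - C * B - C * A + C := by
  linear_combination mul_pos (sub_pos.2 hA) (sub_pos.2 hB)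

theorem mul_sub_mul_add_lt_of_one_lt (hA : 1 < A) (hC : 1 < C) (B : R) :
    C * A * B - C * B - C * A + C < C * A * B - C * B - A + 1 := by
  linear_combination mul_pos (sub_pos.2 hC) (sub_pos.2 hA)

end OrderedRing

theorem stmt12 (a b m n : ℕ) (ha : 0 < a) (ham : a < m) (hmn : m < n)
    (hb : b = m - a) :
    ((2 : ℤ) ^ (n - m) - 1) * (2 ^ m - 2 ^ a - 2 ^ b + 1) <
      2 ^ n - 2 ^ (n - a) - 2 ^ (n - b) + 2 ^ (n - m) ∧
    (2 : ℤ) ^ n - 2 ^ (n - a) - 2 ^ (n - b) + 2 ^ (n - m) <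
      2 ^ n - 2 ^ (n - a) - 2 ^ a + 1 := by
  have hm : (2 : ℤ) ^ m = 2 ^ a * 2 ^ b := by rw [← pow_add]; congr 1; omega
  have hn : (2 : ℤ) ^ n = 2 ^ (n - m) * 2 ^ a * 2 ^ b := by
    rw [← pow_add, ← pow_add]; congr 1; omega
  have hna : (2 : ℤ) ^ (n - a) = 2 ^ (n - m) * 2 ^ b := by rw [← pow_add]; congr 1; omega
  have hnb : (2 : ℤ) ^ (n - b) = 2 ^ (n - m) * 2 ^ a := by rw [← pow_add]; congr 1; omega
  have hA : (1 : ℤ) < 2 ^ a := one_lt_pow₀ one_lt_two ha.ne'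
  have hB : (1 : ℤ) < 2 ^ b := one_lt_pow₀ one_lt_two (by omega)
  have hC : (1 : ℤ) < 2 ^ (n - m) := one_lt_pow₀ one_lt_two (by omega)
  rw [hm, hn, hna, hnb]
  exact ⟨sub_one_mul_lt_of_one_lt hA hB _, mul_sub_mul_add_lt_of_one_lt hA hC _⟩
end
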